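/- Let d ≥ 1 and s > 2, and define K_{s,d}(x) = (1/(2π)^d) ∫_{ℝ^d} e^{−‖ξ‖^s} cos(x·ξ) dξ for x ∈ ℝ^d (the kernel of the higher-order heat propagator e^{−Λ^s} on ℝ^d, whose imaginary part vanishes by symmetry). Then there exists x ∈ ℝ^d with K_{s,d}(x) < 0; in particular min_{x∈ℝ^d} K_{s,d}(x) < 0. -/

import Mathlib

/-!
If `K` were nonnegative, then for every `b > 0` and `ξ₀`,
`∫ K(x) e^{-b‖x‖²} (1 - cos ⟪x, ξ₀⟫)² dx ≥ 0`. Writing `(1 - cos θ)² = (3 - 4 cos θ + cos 2θ) / 2`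
and moving the Gaussian to the frequency side by Fubini turns this into a combination of
convolutions of `g ξ = exp (-‖ξ‖ ^ s)` with the Gauss–Weierstrass kernel; letting `b → 0` gives
`3 - 4 g ξ₀ + g (2 ξ₀) ≥ 0`, i.e. `3 - 4 e^{-u} + e^{-2^s u} ≥ 0` with `u = ‖ξ₀‖ ^ s`,
which fails for small `u > 0` as soon as `2^s > 4`.
-/

open MeasureTheory Real Filter Topology Module
open scoped RealInnerProductSpace

variable {V : Type*} [NormedAddCommGroup V] [InnerProductSpace ℝ V] [FiniteDimensional ℝ V]
  [MeasurableSpace V] [BorelSpace V]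

theorem integrable_exp_neg_mul_sq_norm {b : ℝ} (hb : 0 < b) :
    Integrable (fun v : V => exp (-b * ‖v‖ ^ 2)) := by
  refine (GaussianFourier.integrable_cexp_neg_mul_sq_norm_add (b := (b : ℂ))
    (by simpa using hb) 0 (0 : V)).norm.congr (.of_forall fun v => ?_)
  simp [Complex.norm_exp, ← Complex.ofReal_pow]

theorem MeasureTheory.Integrable.mul_cos {φ θ : V → ℝ} (hφ : Integrable φ) (hθ : Continuous θ) :
    Integrable (fun x => φ x * cos (θ x)) :=
  hφ.mul_bdd (by fun_prop : Continuous fun x => cos (θ x)).aestronglyMeasurable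
    (.of_forall fun x => abs_cos_le_one (θ x))

theorem abs_mul_cos_le (a θ : ℝ) : |a * cos θ| ≤ |a| := by
  rw [abs_mul]
  exact mul_le_of_le_one_right (abs_nonneg a) (abs_cos_le_one θ)

noncomputable def cosTransform (g : V → ℝ) (x : V) : ℝ := ∫ ξ, g ξ * cos ⟪x, ξ⟫

/-- Normalised as the cosine transform of `exp (-b * ‖·‖ ^ 2)`, i.e. `(2π)^n` times the heat
kernel at time `b`. -/
noncomputable def gaussKernel (b : ℝ) (w : V) : ℝ :=
  (π / b) ^ (finrank ℝ V / 2 : ℝ) * exp (-‖w‖ ^ 2 / (4 * b))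

theorem cosTransform_exp_neg_mul_sq_norm {b : ℝ} (hb : 0 < b) (w : V) :
    cosTransform (fun v => exp (-b * ‖v‖ ^ 2)) w = gaussKernel b w := by
  have hb' : 0 < (b : ℂ).re := by simpa using hb
  have h := congrArg Complex.re
    (GaussianFourier.integral_cexp_neg_mul_sq_norm_add hb' Complex.I w)
  rw [← RCLike.re_to_complex, ← integral_re
    (GaussianFourier.integrable_cexp_neg_mul_sq_norm_add hb' Complex.I w)] at h
  rw [cosTransform]
  convert h using 1
  · congr 1 with v
    simp [Complex.exp_re, ← Complex.ofReal_pow]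
  · rw [gaussKernel, Complex.I_sq, ← Complex.ofReal_natCast, ← Complex.ofReal_div,
      ← Complex.ofReal_ofNat, ← Complex.ofReal_div, ← Complex.ofReal_cpow (by positivity)]
    norm_cast
    simp [neg_div]

theorem integrable_gaussKernel {b : ℝ} (hb : 0 < b) : Integrable (gaussKernel b : V → ℝ) := by
  refine ((integrable_exp_neg_mul_sq_norm (V := V) (inv_pos.2 (mul_pos four_pos hb))).const_mul
    ((π / b) ^ (finrank ℝ V / 2 : ℝ))).congr (.of_forall fun w => ?_)
  simp only [gaussKernel, neg_mul, neg_div, inv_mul_eq_div]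

variable {g φ : V → ℝ} {C : ℝ}

theorem abs_cosTransform_le (hg : Integrable g) (x : V) : |cosTransform g x| ≤ ∫ ξ, |g ξ| :=
  norm_integral_le_of_norm_le (f := fun ξ => g ξ * cos ⟪x, ξ⟫) hg.abs
    (.of_forall fun _ => abs_mul_cos_le _ _)

theorem continuous_cosTransform (hg : Integrable g) : Continuous (cosTransform g) :=
  continuous_of_dominated
    (fun x => hg.aestronglyMeasurable.mul
      (by fun_prop : Continuous fun ξ => cos ⟪x, ξ⟫).aestronglyMeasurable)
    (fun _ => .of_forall fun _ => abs_mul_cos_le _ _) hg.norm (.of_forall fun _ => by fun_prop)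

theorem integrable_cosTransform_mul (hg : Integrable g) (hφ : Integrable φ) :
    Integrable (fun x => cosTransform g x * φ x) :=
  hφ.bdd_mul (continuous_cosTransform hg).aestronglyMeasurable
    (.of_forall fun x => abs_cosTransform_le hg x)

theorem integral_cosTransform_mul (hg : Integrable g) (hφ : Integrable φ) :
    ∫ x, cosTransform g x * φ x = ∫ ξ, g ξ * cosTransform φ ξ := by
  have hprod : Integrable (fun z : V × V => g z.2 * cos ⟪z.1, z.2⟫ * φ z.1)
      (volume.prod volume) := by
    refine (hφ.norm.mul_prod hg.norm).mono' ?_ (.of_forall fun z => ?_)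
    · exact (hg.aestronglyMeasurable.comp_snd.mul (by fun_prop : Continuous fun z : V × V =>
        cos ⟪z.1, z.2⟫).aestronglyMeasurable).mul hφ.aestronglyMeasurable.comp_fst
    · rw [norm_mul, mul_comm]
      exact mul_le_mul_of_nonneg_left (abs_mul_cos_le _ _) (norm_nonneg (φ z.1))
  simp_rw [cosTransform, ← integral_mul_const, ← integral_const_mul]
  rw [integral_integral_swap hprod]
  congr 1 with ξ
  congr 1 with x
  rw [real_inner_comm]
  ring

theorem cosTransform_exp_neg_mul_sq_norm_mul_cos {b : ℝ} (hb : 0 < b) (ζ ξ : V) :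
    cosTransform (fun x => exp (-b * ‖x‖ ^ 2) * cos ⟪x, ζ⟫) ξ =
      (gaussKernel b (ξ + ζ) + gaussKernel b (ξ - ζ)) / 2 := by
  have hint (w : V) := (integrable_exp_neg_mul_sq_norm hb).mul_cos
    (by fun_prop : Continuous fun v : V => ⟪w, v⟫)
  have hgauss (w : V) : ∫ x, exp (-b * ‖x‖ ^ 2) * cos ⟪w, x⟫ = gaussKernel b w :=
    cosTransform_exp_neg_mul_sq_norm hb w
  have hprod (x : V) : exp (-b * ‖x‖ ^ 2) * cos ⟪x, ζ⟫ * cos ⟪ξ, x⟫ =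
      (exp (-b * ‖x‖ ^ 2) * cos ⟪ξ + ζ, x⟫ + exp (-b * ‖x‖ ^ 2) * cos ⟪ξ - ζ, x⟫) / 2 := by
    rw [inner_add_left, inner_sub_left, cos_add, cos_sub, real_inner_comm x ζ]
    ring
  simp only [cosTransform, hprod]
  rw [integral_div, integral_add (hint _) (hint _), hgauss, hgauss]

theorem integral_mul_gaussKernel_sub {b : ℝ} (hb : 0 < b) (ζ : V) :
    ∫ ξ, g ξ * gaussKernel b (ξ - ζ) =
      (4 * π) ^ (finrank ℝ V / 2 : ℝ) * ∫ u, g (ζ + (2 * √b) • u) * exp (-‖u‖ ^ 2) := by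
  set r := 2 * √b with hr
  have hr0 : 0 < r := by positivity
  have h4b : 4 * b = r ^ 2 := by rw [hr, mul_pow, sq_sqrt hb.le]; norm_num
  have hsubst : ∫ ξ, g ξ * exp (-‖ξ - ζ‖ ^ 2 / (4 * b)) =
      r ^ finrank ℝ V * ∫ u, g (ζ + r • u) * exp (-‖u‖ ^ 2) := by
    rw [← integral_add_right_eq_self _ ζ, ← smul_eq_mul (r ^ finrank ℝ V),
      ← Measure.integral_comp_inv_smul_of_nonneg volume
        (fun u => g (ζ + r • u) * exp (-‖u‖ ^ 2)) hr0.le]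
    congr 1 with ξ
    rw [smul_inv_smul₀ hr0.ne', add_sub_cancel_right, add_comm, norm_smul, h4b, norm_inv,
      norm_of_nonneg hr0.le]
    ring_nf
  have hconst : (π / b) ^ (finrank ℝ V / 2 : ℝ) * r ^ finrank ℝ V =
      (4 * π) ^ (finrank ℝ V / 2 : ℝ) := by
    have hr2 : r ^ finrank ℝ V = (4 * b) ^ (finrank ℝ V / 2 : ℝ) := by
      rw [h4b, ← rpow_natCast r 2, ← rpow_mul hr0.le, Nat.cast_ofNat,
        mul_div_cancel₀ _ two_ne_zero, rpow_natCast]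
    rw [hr2, ← mul_rpow (by positivity) (by positivity)]
    field_simp
  simp only [gaussKernel, mul_left_comm (g _)]
  rw [integral_const_mul, hsubst, ← mul_assoc, hconst]

theorem tendsto_integral_comp_smul_mul_exp_neg_sq_norm
    (hg : Continuous g) (hC : ∀ ξ, |g ξ| ≤ C) (ζ : V) :
    Tendsto (fun r : ℝ => ∫ u, g (ζ + r • u) * exp (-‖u‖ ^ 2)) (𝓝 0)
      (𝓝 (π ^ (finrank ℝ V / 2 : ℝ) * g ζ)) := by
  have hgauss : Integrable (fun u : V => exp (-‖u‖ ^ 2)) := by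
    simpa using integrable_exp_neg_mul_sq_norm (V := V) one_pos
  have hlim : ∫ u : V, g (ζ + (0 : ℝ) • u) * exp (-‖u‖ ^ 2) =
      π ^ (finrank ℝ V / 2 : ℝ) * g ζ := by
    have h := GaussianFourier.integral_rexp_neg_mul_sq_norm (V := V) one_pos
    simp only [neg_mul, one_mul, div_one] at h
    simp only [zero_smul, add_zero, integral_const_mul, h, mul_comm]
  rw [← hlim]
  refine tendsto_integral_filter_of_dominated_convergence (fun u => C * exp (-‖u‖ ^ 2))
    (.of_forall fun _ => by fun_prop) (.of_forall fun r => .of_forall fun u => ?_)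
    (hgauss.const_mul C) (.of_forall fun u =>
      (by fun_prop : Continuous fun r : ℝ => g (ζ + r • u) * exp (-‖u‖ ^ 2)).tendsto 0)
  rw [norm_mul, norm_of_nonneg (exp_pos _).le]
  exact mul_le_mul_of_nonneg_right (hC _) (exp_pos _).le

theorem tendsto_integral_mul_gaussKernel_sub
    (hg : Continuous g) (hC : ∀ ξ, |g ξ| ≤ C) (ζ : V) :
    Tendsto (fun b => ∫ ξ, g ξ * gaussKernel b (ξ - ζ)) (𝓝[>] 0)
      (𝓝 ((2 * π) ^ finrank ℝ V * g ζ)) := by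
  have hr : Tendsto (fun b : ℝ => 2 * √b) (𝓝[>] 0) (𝓝 0) := by
    simpa using ((by fun_prop : Continuous fun b : ℝ => 2 * √b).tendsto 0).mono_left
      nhdsWithin_le_nhds
  have hconst : (4 * π) ^ (finrank ℝ V / 2 : ℝ) * (π ^ (finrank ℝ V / 2 : ℝ) * g ζ) =
      (2 * π) ^ finrank ℝ V * g ζ := by
    rw [← mul_assoc, ← mul_rpow (by positivity) pi_pos.le,
      show 4 * π * π = (2 * π) ^ (2 : ℕ) by ring, ← rpow_natCast, ← rpow_mul (by positivity),
      Nat.cast_ofNat, mul_div_cancel₀ _ two_ne_zero, rpow_natCast]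
  rw [← hconst]
  refine (((tendsto_integral_comp_smul_mul_exp_neg_sq_norm hg hC ζ).comp hr).const_mul _).congr'
    (eventually_nhdsWithin_of_forall fun b hb => ?_)
  exact (integral_mul_gaussKernel_sub hb ζ).symm

theorem tendsto_integral_cosTransform_mul_exp_neg_mul_sq_norm_mul_cos
    (hgi : Integrable g) (hg : Continuous g) (hC : ∀ ξ, |g ξ| ≤ C) (ζ : V) :
    Tendsto (fun b => ∫ x, cosTransform g x * (exp (-b * ‖x‖ ^ 2) * cos ⟪x, ζ⟫)) (𝓝[>] 0)
      (𝓝 ((2 * π) ^ finrank ℝ V * ((g ζ + g (-ζ)) / 2))) := by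
  have hint {b : ℝ} (hb : 0 < b) (c : V) : Integrable (fun ξ => g ξ * gaussKernel b (ξ - c)) :=
    ((integrable_gaussKernel hb).comp_sub_right c).bdd_mul hg.aestronglyMeasurable
      (.of_forall fun ξ => hC ξ)
  rw [show (2 * π) ^ finrank ℝ V * ((g ζ + g (-ζ)) / 2) =
    ((2 * π) ^ finrank ℝ V * g ζ + (2 * π) ^ finrank ℝ V * g (-ζ)) / 2 by ring]
  refine (((tendsto_integral_mul_gaussKernel_sub hg hC ζ).add
    (tendsto_integral_mul_gaussKernel_sub hg hC (-ζ))).div_const 2).congr'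
    (eventually_nhdsWithin_of_forall fun b (hb : 0 < b) => ?_)
  have hpt (ξ : V) : g ξ * ((gaussKernel b (ξ + ζ) + gaussKernel b (ξ - ζ)) / 2) =
      (g ξ * gaussKernel b (ξ - ζ) + g ξ * gaussKernel b (ξ - -ζ)) / 2 := by
    rw [sub_neg_eq_add]
    ring
  dsimp only
  rw [integral_cosTransform_mul hgi ((integrable_exp_neg_mul_sq_norm hb).mul_cos
    (θ := fun x => ⟪x, ζ⟫) (by fun_prop))]
  simp only [cosTransform_exp_neg_mul_sq_norm_mul_cos hb, hpt]
  rw [integral_div, integral_add (hint hb ζ) (hint hb (-ζ))]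

theorem four_mul_add_le_of_cosTransform_nonneg
    (hgi : Integrable g) (hg : Continuous g) (hC : ∀ ξ, |g ξ| ≤ C)
    (hF : ∀ x, 0 ≤ cosTransform g x) (ξ₀ : V) :
    4 * (g ξ₀ + g (-ξ₀)) ≤ 6 * g 0 + (g ((2 : ℝ) • ξ₀) + g (-((2 : ℝ) • ξ₀))) := by
  set Φ : ℝ → V → ℝ := fun b ζ => ∫ x, cosTransform g x * (exp (-b * ‖x‖ ^ 2) * cos ⟪x, ζ⟫)
  have hint {b : ℝ} (hb : 0 < b) (ζ : V) :
      Integrable (fun x => cosTransform g x * (exp (-b * ‖x‖ ^ 2) * cos ⟪x, ζ⟫)) :=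
    integrable_cosTransform_mul hgi ((integrable_exp_neg_mul_sq_norm hb).mul_cos
      (θ := fun x => ⟪x, ζ⟫) (by fun_prop))
  have hnonneg {b : ℝ} (hb : 0 < b) : 0 ≤ 3 * Φ b 0 - 4 * Φ b ξ₀ + Φ b ((2 : ℝ) • ξ₀) := by
    have h34 : Integrable (fun x =>
        3 * (cosTransform g x * (exp (-b * ‖x‖ ^ 2) * cos ⟪x, 0⟫)) -
          4 * (cosTransform g x * (exp (-b * ‖x‖ ^ 2) * cos ⟪x, ξ₀⟫))) :=
      ((hint hb 0).const_mul 3).sub ((hint hb ξ₀).const_mul 4)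
    simp only [Φ]
    rw [← integral_const_mul, ← integral_const_mul,
      ← integral_sub ((hint hb 0).const_mul 3) ((hint hb ξ₀).const_mul 4),
      ← integral_add h34 (hint hb _)]
    refine integral_nonneg fun x => ?_
    have hcos : 3 * cos ⟪x, 0⟫ - 4 * cos ⟪x, ξ₀⟫ + cos ⟪x, (2 : ℝ) • ξ₀⟫ =
        2 * (1 - cos ⟪x, ξ₀⟫) ^ 2 := by
      rw [inner_zero_right, inner_smul_right, cos_zero, cos_two_mul]
      ring
    have := mul_nonneg (mul_nonneg (hF x) (exp_pos (-b * ‖x‖ ^ 2)).le)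
      (mul_nonneg zero_le_two (sq_nonneg (1 - cos ⟪x, ξ₀⟫)))
    rw [← hcos] at this
    exact this.trans_eq (by ring)
  have hlim (ζ : V) := tendsto_integral_cosTransform_mul_exp_neg_mul_sq_norm_mul_cos hgi hg hC ζ
  have hL := ge_of_tendsto ((((hlim 0).const_mul 3).sub ((hlim ξ₀).const_mul 4)).add
    (hlim ((2 : ℝ) • ξ₀))) (eventually_nhdsWithin_of_forall fun _ hb => hnonneg hb)
  rw [neg_zero] at hL
  have hL' : 0 ≤ (2 * π) ^ finrank ℝ V *
      (6 * g 0 + (g ((2 : ℝ) • ξ₀) + g (-((2 : ℝ) • ξ₀))) - 4 * (g ξ₀ + g (-ξ₀))) := by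
    linarith
  linarith [(mul_nonneg_iff_of_pos_left (by positivity)).1 hL']

theorem integrable_exp_neg_norm_rpow {s : ℝ} (hs : 0 < s) :
    Integrable (fun ξ : V => exp (-‖ξ‖ ^ s)) := by
  rcases subsingleton_or_nontrivial V with hV | hV
  · exact (integrable_const _).congr (.of_forall fun ξ => by rw [Subsingleton.elim ξ 0])
  · refine (integrable_fun_norm_addHaar volume (f := fun y => exp (-y ^ s))).2 ?_
    refine (integrableOn_rpow_mul_exp_neg_rpow (s := ((finrank ℝ V - 1 : ℕ) : ℝ))
      (neg_one_lt_zero.trans_le (Nat.cast_nonneg _)) hs).congr_fun (fun y _ => ?_)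
      measurableSet_Ioi
    simp [rpow_natCast]

/-- The left side vanishes at `u = 0` with derivative `4 - c < 0`. -/
theorem exists_three_sub_four_mul_exp_neg_add_exp_neg_lt_zero {c : ℝ} (hc : 4 < c) :
    ∃ u > 0, 3 - 4 * exp (-u) + exp (-(c * u)) < 0 := by
  set u := (c - 4) / (8 * c) with hu_def
  have hu : 0 < u := div_pos (by linarith) (by linarith)
  have hcu : c * u = (c - 4) / 8 := by rw [hu_def]; field_simp
  have h1 : 1 - u ≤ exp (-u) := by linarith [add_one_le_exp (-u)]
  have h2 : exp (-(c * u)) * (1 + c * u) ≤ 1 := by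
    rw [exp_neg, inv_mul_le_iff₀ (exp_pos _)]
    linarith [add_one_le_exp (c * u)]
  exact ⟨u, hu, by nlinarith⟩

theorem stmt_10 (d : ℕ) (hd : 1 ≤ d) (s : ℝ) (hs : 2 < s) :
    ∃ x : EuclideanSpace ℝ (Fin d),
      (1 / (2 * Real.pi) ^ d) *
        (∫ ξ : EuclideanSpace ℝ (Fin d),
          Real.exp (-(‖ξ‖ ^ s)) * Real.cos ((inner ℝ x ξ : ℝ))) < 0 := by
  by_contra! hK
  have hs0 : 0 < s := by linarith
  have hF (x : EuclideanSpace ℝ (Fin d)) :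
      0 ≤ cosTransform (fun ξ : EuclideanSpace ℝ (Fin d) => exp (-‖ξ‖ ^ s)) x :=
    (mul_nonneg_iff_of_pos_left (by positivity)).1 (hK x)
  have hc : 4 < (2 : ℝ) ^ s := by
    simpa [show (2 : ℝ) ^ (2 : ℝ) = 4 by norm_num] using
      rpow_lt_rpow_of_exponent_lt one_lt_two hs
  obtain ⟨u, hu, hneg⟩ := exists_three_sub_four_mul_exp_neg_add_exp_neg_lt_zero hc
  have : Nonempty (Fin d) := ⟨⟨0, hd⟩⟩
  obtain ⟨ξ₀, hξ₀⟩ := exists_norm_eq (EuclideanSpace ℝ (Fin d)) (rpow_nonneg hu.le s⁻¹)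
  have hnorm : ‖ξ₀‖ ^ s = u := by rw [hξ₀, ← rpow_mul hu.le, inv_mul_cancel₀ hs0.ne', rpow_one]
  have hle := four_mul_add_le_of_cosTransform_nonneg (C := 1)
    (integrable_exp_neg_norm_rpow hs0) (by fun_prop (disch := exact hs0.le))
    (fun ξ => by rw [abs_of_pos (exp_pos _), exp_le_one_iff, neg_nonpos]; positivity) hF ξ₀
  simp only [norm_neg, norm_zero, zero_rpow hs0.ne', norm_smul, Real.norm_two,
    mul_rpow zero_le_two (norm_nonneg _), hnorm, neg_zero, exp_zero] at hle
  linarith
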